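/- arXiv:2210.14092 — 2 statements merged into one kernel-verified Lean document; each statement's English description precedes it below -/
import Mathlib

section
/- Let X̃ be a fuzzy incidence graph. Then X̃ is a strong fuzzy incidence graph if and only if every cycle in X̃ is a weak fuzzy incidence cycle (i.e., every cycle of the support graph contains no unique pair of least η-weight). -/
open scoped BigOperators

/-- A fuzzy incidence graph on a finite vertex type `V`.  An (undirected, loopless) edge `xy`
is encoded by the symmetric membership function `rho`, and the incidence pair `(x, xy)`
is encoded by `eta x y` (so `eta x y` is the membership value of the pair consisting of the
vertex `x` and the edge joining `x` and `y`). All membership values lie in `[0,1]`,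
`rho xy ≤ min (eps x) (eps y)` and `eta (x, xy) ≤ min (eps x) (rho xy)`. -/
structure FIG (V : Type) [Fintype V] [DecidableEq V] where
  eps : V → ℝ
  rho : V → V → ℝ
  eta : V → V → ℝ
  eps_nonneg : ∀ x, 0 ≤ eps x
  eps_le_one : ∀ x, eps x ≤ 1
  rho_nonneg : ∀ x y, 0 ≤ rho x y
  rho_symm : ∀ x y, rho x y = rho y x
  rho_le : ∀ x y, rho x y ≤ min (eps x) (eps y)
  rho_irrefl : ∀ x, rho x x = 0
  eta_nonneg : ∀ x y, 0 ≤ eta x y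
  eta_le : ∀ x y, eta x y ≤ min (eps x) (rho x y)

namespace FIG

variable {V V₁ V₂ : Type} [Fintype V] [DecidableEq V]
  [Fintype V₁] [DecidableEq V₁] [Fintype V₂] [DecidableEq V₂]

/-- `(x, xy)` is a pair of the fuzzy incidence graph (i.e. belongs to the support `η*`). -/
def IsPair (G : FIG V) (x y : V) : Prop := 0 < G.eta x y

/-- the minimum of the two pair weights along one edge step of an incidence path -/
def pairMin (G : FIG V) (a b : V) : ℝ := min (G.eta a b) (G.eta b a)

/-- the minimum of the pair weights along the internal steps of a vertex list -/
def chainStrength (G : FIG V) : List V → ℝ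
  | [] => 1
  | [_] => 1
  | a :: b :: l => min (G.pairMin a b) (G.chainStrength (b :: l))

/-- The set of incidence strengths of incidence paths from the vertex `x` to the edge `yz`:
a path is recorded by its (pairwise distinct) sequence of vertices, starting at `x` and ending
at an endpoint of the edge `yz`; its strength is the minimum of the weights of its pairs
(pairs of weight `0` are not genuine pairs, but a list using them has strength `0`, so
including such lists does not alter the supremum below). -/
def pathStrengths (G : FIG V) (x y z : V) : Set ℝ :=
  {s | ∃ l : List V, l.Nodup ∧ l.head? = some x ∧
      ((l.getLast? = some y ∧ s = min (G.chainStrength l) (G.eta y z)) ∨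
       (l.getLast? = some z ∧ s = min (G.chainStrength l) (G.eta z y)))}

/-- `ICONN G x y z` is the greatest incidence strength of an incidence path from the
vertex `x` to the edge `yz` (the incidence connectivity `ICONN_G (x, yz)`). -/
noncomputable def ICONN (G : FIG V) (x y z : V) : ℝ := sSup (G.pathStrengths x y z)

/-- the fuzzy incidence graph obtained by deleting the pair `(a, ab)` -/
def deletePair (G : FIG V) (a b : V) : FIG V where
  eps := G.eps
  rho := G.rho
  eta := fun u v => if u = a ∧ v = b then 0 else G.eta u v
  eps_nonneg := G.eps_nonneg
  eps_le_one := G.eps_le_one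
  rho_nonneg := G.rho_nonneg
  rho_symm := G.rho_symm
  rho_le := G.rho_le
  rho_irrefl := G.rho_irrefl
  eta_nonneg := by
    intro u v; split
    · exact le_refl 0
    · exact G.eta_nonneg u v
  eta_le := by
    intro u v; split
    · exact le_min (G.eps_nonneg u) (G.rho_nonneg u v)
    · exact G.eta_le u v

/-- The pair `(x, xy)` is strong: its weight is at least the incidence connectivity
between `x` and the edge `xy` in the graph obtained by deleting the pair `(x, xy)`. -/
def IsStrongPair (G : FIG V) (x y : V) : Prop :=
  (G.deletePair x y).ICONN x x y ≤ G.eta x y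

/-- a strong fuzzy incidence graph: every pair is strong -/
def Strong (G : FIG V) : Prop := ∀ x y, G.IsPair x y → G.IsStrongPair x y

/-- The pair `(x, xy)` is effective: `η(x, xy) = min (ε x) (ρ xy)`. -/
def EffectivePair (G : FIG V) (x y : V) : Prop :=
  G.eta x y = min (G.eps x) (G.rho x y)

/-- a fuzzy incidence graph in which every pair is effective -/
def EffectivePairs (G : FIG V) : Prop := ∀ x y, G.IsPair x y → G.EffectivePair x y

/-- A cycle in the fuzzy incidence graph `G`, recorded as a list of (at least three)
pairwise distinct vertices, cyclically consecutive vertices being joined by edges all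
of whose pairs belong to the support `η*`. -/
def IsCycle (G : FIG V) (l : List V) : Prop :=
  3 ≤ l.length ∧ l.Nodup ∧
  ∀ i : Fin l.length, G.IsPair (l.get i) (l.get (finRotate l.length i)) ∧ G.IsPair (l.get (finRotate l.length i)) (l.get i)

/-- the weight of a pair of the cycle `l`: the pair indexed by `(i, true)` is
`(lᵢ, lᵢlᵢ₊₁)` and the pair indexed by `(i, false)` is `(lᵢ₊₁, lᵢlᵢ₊₁)` (indices mod length) -/
def cyclePairWeight (G : FIG V) (l : List V) (p : Fin l.length × Bool) : ℝ :=
  if p.2 then G.eta (l.get p.1) (l.get (finRotate l.length p.1)) else G.eta (l.get (finRotate l.length p.1)) (l.get p.1)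

/-- a weak fuzzy incidence cycle: a cycle with no unique pair of least weight, i.e. at
least two distinct pairs of the cycle attain the minimum pair weight of the cycle -/
def IsWFIC (G : FIG V) (l : List V) : Prop :=
  G.IsCycle l ∧ ∃ p q : Fin l.length × Bool, p ≠ q ∧
    G.cyclePairWeight l p = G.cyclePairWeight l q ∧
    ∀ r : Fin l.length × Bool, G.cyclePairWeight l p ≤ G.cyclePairWeight l r

/-!
A pair `(x, xy)` fails to be strong exactly when there is a bypass: an incidence path from `x`
to `y` whose pairs, together with `(y, yx)`, are all heavier than `(x, xy)`. Closing a bypass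
with the edge `yx` gives a cycle in which `(x, xy)` is the unique lightest pair. Conversely, if
a cycle has a unique lightest pair, going around the cycle the other way from the edge carrying
it gives a bypass for that pair.
-/

theorem _root_.List.Nodup.get_finRotate {α : Type*} [DecidableEq α] {l : List α}
    (hl : l.Nodup) (i : Fin l.length) :
    l.get (finRotate l.length i) = l.next (l.get i) (l.get_mem i) := by
  have : NeZero l.length := i.neZero
  simp only [List.get_eq_getElem, List.next_getElem _ hl, finRotate_apply, Fin.val_add,
    Fin.val_one', Nat.add_mod_mod]

theorem _root_.List.IsChain.rel_next {α : Type*} [DecidableEq α] {R : α → α → Prop}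
    {l : List α} (hR : l.IsChain R) (hl : l.Nodup) {a : α} (ha : a ∈ l)
    (hlast : l.getLast? ≠ some a) : R a (l.next a ha) := by
  obtain ⟨k, hk, rfl⟩ := List.getElem_of_mem ha
  have hk1 : k + 1 < l.length := by
    by_contra h
    rw [List.getLast?_eq_getElem?, List.getElem?_eq_getElem (by omega)] at hlast
    exact hlast (by congr 2; omega)
  simpa [List.next_getElem _ hl, Nat.mod_eq_of_lt hk1] using List.isChain_iff_getElem.mp hR k hk1

theorem _root_.List.Nodup.exists_isRotated_head_next {α : Type*} [DecidableEq α] {l : List α}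
    (hl : l.Nodup) {u : α} (hu : u ∈ l) :
    ∃ L : List α, L ~r l ∧ L.head? = some (l.next u hu) ∧ L.getLast? = some u ∧
      L.IsChain (fun a c => ∃ ha : a ∈ l, a ≠ u ∧ c = l.next a ha) := by
  obtain ⟨k, hk⟩ := List.get_of_mem (l.next_mem _ hu)
  set L := l.rotate k
  have hrot : L ~r l := List.IsRotated.forall l k
  have hnd : L.Nodup := List.nodup_rotate.mpr hl
  have hne : L ≠ [] := by simpa [L] using List.ne_nil_of_mem hu
  have hhead : L.head hne = l.next u hu := by
    rw [← hk, List.head_eq_getElem]; simp [L, List.getElem_rotate, Nat.mod_eq_of_lt k.isLt]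
  have hprev : ∀ b (hb : b ∈ l), b = l.next u hu → l.prev b hb = u := by
    rintro b hb rfl; exact List.prev_next l hl u hu
  refine ⟨L, hrot, hhead ▸ List.head?_eq_some_head hne, ?_, ?_⟩
  · rw [List.getLast?_eq_some_getLast hne, ← List.prev_head_eq_getLast _ hne,
      List.isRotated_prev_eq hrot hnd, hprev _ _ hhead]
  · refine List.isChain_iff_getElem.mpr fun i hi => ?_
    have ha : L[i] ∈ l := hrot.mem_iff.mp (List.getElem_mem _)
    have hsucc : L[i + 1] = l.next L[i] ha := by
      rw [← List.isRotated_next_eq hrot hnd (List.getElem_mem _), List.next_getElem _ hnd]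
      simp [Nat.mod_eq_of_lt hi]
    refine ⟨ha, fun hiu => ?_, hsucc⟩
    have : L[i + 1] = L[0] := by
      rw [hsucc, ← List.head_eq_getElem hne, hhead]; simp [hiu]
    simp [hnd.getElem_inj_iff] at this

theorem _root_.not_exists_forall_ne_lt_iff {ι α : Type*} [Finite ι] [Nonempty ι] [LinearOrder α]
    (f : ι → α) :
    (¬ ∃ p, ∀ q, q ≠ p → f p < f q) ↔ ∃ p q, p ≠ q ∧ f p = f q ∧ ∀ r, f p ≤ f r := by
  constructor
  · intro h
    obtain ⟨p, hp⟩ := Finite.exists_min f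
    push Not at h
    obtain ⟨q, hqp, hq⟩ := h p
    exact ⟨p, q, hqp.symm, le_antisymm (hp q) hq, hp⟩
  · rintro ⟨p, q, hpq, heq, hmin⟩ ⟨r, hr⟩
    rcases eq_or_ne p r with rfl | hpr
    · exact (hr q hpq.symm).ne heq
    · exact (hr p hpr).not_ge (hmin r)

theorem eta_le_one (G : FIG V) (x y : V) : G.eta x y ≤ 1 :=
  ((G.eta_le x y).trans (min_le_left _ _)).trans (G.eps_le_one x)

theorem IsPair.ne {G : FIG V} {x y : V} (h : G.IsPair x y) : x ≠ y := by
  rintro rfl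
  have := (G.eta_le x x).trans (min_le_right _ _)
  rw [G.rho_irrefl] at this
  exact (h.trans_le this).false

theorem pairMin_comm (G : FIG V) (a b : V) : G.pairMin a b = G.pairMin b a := min_comm _ _

theorem isChain_of_lt_chainStrength (G : FIG V) {w : ℝ} :
    ∀ {l : List V}, w < G.chainStrength l → l.IsChain (fun a b => w < G.pairMin a b)
  | [], _ => .nil
  | [_], _ => .singleton _
  | _ :: _ :: _, h => by
    rw [chainStrength, lt_min_iff] at h
    exact .cons_cons h.1 (isChain_of_lt_chainStrength G h.2)

theorem lt_chainStrength_of_isChain (G : FIG V) {w : ℝ} (hw : w < 1) :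
    ∀ {l : List V}, l.IsChain (fun a b => w < G.pairMin a b) → w < G.chainStrength l
  | [], _ => hw
  | [_], _ => hw
  | _ :: _ :: _, h => by
    rw [List.isChain_cons_cons] at h
    exact lt_min h.1 (lt_chainStrength_of_isChain G hw h.2)

theorem bddAbove_pathStrengths (G : FIG V) (x y z : V) : BddAbove (G.pathStrengths x y z) := by
  refine ⟨1, ?_⟩
  rintro s ⟨l, -, -, ⟨-, rfl⟩ | ⟨-, rfl⟩⟩ <;> exact (min_le_right _ _).trans (G.eta_le_one _ _)

theorem lt_ICONN_of_isChain {G : FIG V} {x y z : V} {w : ℝ} {l : List V} (hl : l.Nodup)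
    (hx : l.head? = some x) (hz : l.getLast? = some z)
    (hchain : l.IsChain (fun a b => w < G.pairMin a b)) (hzy : w < G.eta z y) :
    w < G.ICONN x y z :=
  (lt_min (G.lt_chainStrength_of_isChain (hzy.trans_le (G.eta_le_one z y)) hchain) hzy).trans_le
    (le_csSup (G.bddAbove_pathStrengths x y z) ⟨l, hl, hx, .inr ⟨hz, rfl⟩⟩)

theorem deletePair_eta_self (G : FIG V) (x y : V) : (G.deletePair x y).eta x y = 0 :=
  if_pos ⟨rfl, rfl⟩

theorem deletePair_eta_le (G : FIG V) (x y a b : V) :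
    (G.deletePair x y).eta a b ≤ G.eta a b := by
  simp only [deletePair]
  split_ifs
  exacts [G.eta_nonneg a b, le_rfl]

theorem pairMin_deletePair_le (G : FIG V) (x y a b : V) :
    (G.deletePair x y).pairMin a b ≤ G.pairMin a b :=
  min_le_min (G.deletePair_eta_le x y a b) (G.deletePair_eta_le x y b a)

theorem lt_deletePair_eta {G : FIG V} {x y a b : V} (h : G.eta x y < G.eta a b) :
    G.eta x y < (G.deletePair x y).eta a b := by
  simp only [deletePair]
  split_ifs with hab
  · obtain ⟨rfl, rfl⟩ := hab
    exact absurd h (lt_irrefl _)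
  · exact h

theorem lt_deletePair_pairMin {G : FIG V} {x y a b : V} (h : G.eta x y < G.pairMin a b) :
    G.eta x y < (G.deletePair x y).pairMin a b :=
  lt_min (lt_deletePair_eta (h.trans_le (min_le_left _ _)))
    (lt_deletePair_eta (h.trans_le (min_le_right _ _)))

def IsBypass (G : FIG V) (x y : V) (l : List V) : Prop :=
  l.Nodup ∧ l.head? = some x ∧ l.getLast? = some y ∧
    l.IsChain (fun a b => G.eta x y < G.pairMin a b) ∧ G.eta x y < G.eta y x

theorem not_isStrongPair_iff {G : FIG V} {x y : V} (hxy : G.IsPair x y) :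
    ¬ G.IsStrongPair x y ↔ ∃ l, G.IsBypass x y l := by
  constructor
  · intro h
    have hne : ((G.deletePair x y).pathStrengths x x y).Nonempty :=
      ⟨_, [x], List.nodup_singleton x, rfl, .inl ⟨rfl, rfl⟩⟩
    obtain ⟨s, ⟨l, hl, hx, hend⟩, hs⟩ := exists_lt_of_lt_csSup hne (not_le.mp h)
    rcases hend with ⟨-, rfl⟩ | ⟨hy, rfl⟩
    · -- a path ending at `x` reaches the edge `xy` through the deleted pair
      have := hs.trans_le (min_le_right _ _)
      rw [deletePair_eta_self] at this
      exact absurd hxy this.not_gt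
    · exact ⟨l, hl, hx, hy,
        (isChain_of_lt_chainStrength _ (hs.trans_le (min_le_left _ _))).imp
          fun a b h => h.trans_le (G.pairMin_deletePair_le x y a b),
        (hs.trans_le (min_le_right _ _)).trans_le (G.deletePair_eta_le x y y x)⟩
  · rintro ⟨l, hl, hx, hy, hchain, hyx⟩ h
    exact (lt_ICONN_of_isChain hl hx hy (hchain.imp fun _ _ => lt_deletePair_pairMin)
      (lt_deletePair_eta hyx)).not_ge h

theorem cyclePairWeight_true (G : FIG V) {l : List V} (hl : l.Nodup) {i : Fin l.length} {a : V}
    (ha : a ∈ l) (hi : l.get i = a) : G.cyclePairWeight l (i, true) = G.eta a (l.next a ha) := by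
  subst hi
  exact congrArg (G.eta _) (hl.get_finRotate i)

theorem cyclePairWeight_false (G : FIG V) {l : List V} (hl : l.Nodup) {i : Fin l.length}
    {a : V} (ha : a ∈ l) (hi : l.get i = a) :
    G.cyclePairWeight l (i, false) = G.eta (l.next a ha) a := by
  subst hi
  exact congrArg (G.eta · _) (hl.get_finRotate i)

theorem IsCycle.cyclePairWeight_pos {G : FIG V} {l : List V} (hl : G.IsCycle l) :
    ∀ p, 0 < G.cyclePairWeight l p
  | (i, true) => (hl.2.2 i).1
  | (i, false) => (hl.2.2 i).2

def HasUniqueMinPair (G : FIG V) (l : List V) : Prop :=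
  ∃ p, ∀ q, q ≠ p → G.cyclePairWeight l p < G.cyclePairWeight l q

theorem IsCycle.isWFIC_iff {G : FIG V} {l : List V} (hl : G.IsCycle l) :
    G.IsWFIC l ↔ ¬ G.HasUniqueMinPair l := by
  have : Nonempty (Fin l.length × Bool) := ⟨(⟨0, by have := hl.1; omega⟩, true)⟩
  rw [IsWFIC, HasUniqueMinPair, not_exists_forall_ne_lt_iff, and_iff_right hl]

theorem IsBypass.three_le_length {G : FIG V} {x y : V} {l : List V} (hxy : G.IsPair x y)
    (h : G.IsBypass x y l) : 3 ≤ l.length := by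
  obtain ⟨-, hx, hy, hchain, -⟩ := h
  rcases l with _ | ⟨a, _ | ⟨b, _ | ⟨c, t⟩⟩⟩
  · simp at hx
  · simp only [List.head?_cons, List.getLast?_singleton, Option.some_inj] at hx hy
    exact absurd (hx.symm.trans hy) hxy.ne
  · simp only [List.head?_cons, List.getLast?_cons_cons, List.getLast?_singleton,
      Option.some_inj] at hx hy
    subst hx hy
    exact absurd ((List.isChain_pair.mp hchain).trans_le (min_le_left _ _)) (lt_irrefl _)
  · simp

theorem IsBypass.exists_cyclePairWeight_eq_forall_lt {G : FIG V} {x y : V} {l : List V}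
    (h : G.IsBypass x y l) :
    ∃ p, G.cyclePairWeight l p = G.eta x y ∧ ∀ q, q ≠ p → G.eta x y < G.cyclePairWeight l q := by
  obtain ⟨hnd, hx, hy, hchain, hyx⟩ := h
  have hne : l ≠ [] := by rintro rfl; simp at hx
  have hyl : y ∈ l := List.mem_of_getLast? hy
  have hnext : l.next y hyl = x := by
    rw [List.getLast?_eq_some_getLast hne, Option.some_inj] at hy
    rw [List.head?_eq_some_head hne, Option.some_inj] at hx
    subst hx hy
    exact List.next_getLast_eq_head l hne hnd
  obtain ⟨k, hk⟩ := List.get_of_mem hyl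
  refine ⟨(k, false), by rw [cyclePairWeight_false G hnd hyl hk, hnext], ?_⟩
  rintro ⟨i, b⟩ hib
  by_cases hiy : l.get i = y
  · obtain rfl : i = k := hnd.get_inj_iff.mp (hiy.trans hk.symm)
    obtain rfl : b = true := by simpa using hib
    rwa [cyclePairWeight_true G hnd hyl hiy, hnext]
  · have ha := l.get_mem i
    have hlt := hchain.rel_next hnd ha (by rw [hy]; exact fun h => hiy (Option.some_inj.mp h).symm)
    cases b
    · rw [cyclePairWeight_false G hnd ha rfl]; exact hlt.trans_le (min_le_right _ _)
    · rw [cyclePairWeight_true G hnd ha rfl]; exact hlt.trans_le (min_le_left _ _)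

theorem IsBypass.isCycle_and_hasUniqueMinPair {G : FIG V} {x y : V} {l : List V}
    (hxy : G.IsPair x y) (h : G.IsBypass x y l) : G.IsCycle l ∧ G.HasUniqueMinPair l := by
  obtain ⟨p, hp, hlt⟩ := h.exists_cyclePairWeight_eq_forall_lt
  have hpos : ∀ q, 0 < G.cyclePairWeight l q := fun q => by
    rcases eq_or_ne q p with rfl | hq
    · rw [hp]; exact hxy
    · exact hxy.trans (hlt q hq)
  exact ⟨⟨h.three_le_length hxy, h.1, fun i => ⟨hpos (i, true), hpos (i, false)⟩⟩,
    p, fun q hq => hp ▸ hlt q hq⟩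

theorem HasUniqueMinPair.exists_isBypass {G : FIG V} {l : List V} (hl : G.IsCycle l)
    (h : G.HasUniqueMinPair l) : ∃ x y, G.IsPair x y ∧ ∃ L, G.IsBypass x y L := by
  obtain ⟨⟨i, b⟩, hmin⟩ := h
  have hnd := hl.2.1
  set u := l.get i
  have hu : u ∈ l := l.get_mem i
  set w := G.cyclePairWeight l (i, b)
  have hlt : ∀ a (ha : a ∈ l), a ≠ u → w < G.pairMin a (l.next a ha) := by
    intro a ha hau
    obtain ⟨k, rfl⟩ := List.get_of_mem ha
    have hki : k ≠ i := fun h => hau (h ▸ rfl)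
    refine lt_min ?_ ?_
    · rw [← cyclePairWeight_true G hnd _ rfl]; exact hmin _ (by simp [hki])
    · rw [← cyclePairWeight_false G hnd _ rfl]; exact hmin _ (by simp [hki])
  have hother : w < G.cyclePairWeight l (i, !b) := hmin _ (by simp)
  obtain ⟨L, hrot, hhead, hlast, hchain⟩ := hnd.exists_isRotated_head_next hu
  have hLnd : L.Nodup := hrot.nodup_iff.mpr hnd
  have hLchain : L.IsChain (fun a c => w < G.pairMin a c) :=
    hchain.imp (by rintro a c ⟨ha, hau, rfl⟩; exact hlt a ha hau)
  have hwpos : 0 < w := hl.cyclePairWeight_pos _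
  cases b
  · have hw : w = G.eta (l.next u hu) u := cyclePairWeight_false G hnd hu rfl
    refine ⟨_, _, (hw ▸ hwpos : 0 < G.eta (l.next u hu) u), L, hLnd, hhead, hlast,
      hw ▸ hLchain, ?_⟩
    rw [← hw, ← cyclePairWeight_true G hnd hu rfl]
    exact hother
  · have hw : w = G.eta u (l.next u hu) := cyclePairWeight_true G hnd hu rfl
    refine ⟨_, _, hw ▸ hwpos, L.reverse, List.nodup_reverse.mpr hLnd,
      by rwa [List.head?_reverse], by rwa [List.getLast?_reverse], ?_, ?_⟩
    · rw [← hw, List.isChain_reverse]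
      exact hLchain.imp fun a c h => G.pairMin_comm a c ▸ h
    · rw [← hw, ← cyclePairWeight_false G hnd hu rfl]
      exact hother

/-- **Theorem 4.** A fuzzy incidence graph is a strong fuzzy incidence graph if and only
if every cycle in it is a weak fuzzy incidence cycle. -/
theorem strong_iff_forall_cycle_isWFIC (G : FIG V) :
    G.Strong ↔ ∀ l : List V, G.IsCycle l → G.IsWFIC l := by
  constructor
  · intro hS l hl
    rw [hl.isWFIC_iff]
    intro huniq
    obtain ⟨x, y, hxy, L, hL⟩ := huniq.exists_isBypass hl
    exact (not_isStrongPair_iff hxy).mpr ⟨L, hL⟩ (hS x y hxy)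
  · intro hC x y hxy
    by_contra hns
    obtain ⟨L, hL⟩ := (not_isStrongPair_iff hxy).mp hns
    obtain ⟨hcyc, huniq⟩ := hL.isCycle_and_hasUniqueMinPair hxy
    exact hcyc.isWFIC_iff.mp (hC L hcyc) huniq

end FIG
end

section
/- If X̃₁ and X̃₂ are complete fuzzy incidence graphs, then their composition X̃ = X̃₁[X̃₂] is a complete fuzzy incidence graph. -/
open scoped BigOperators

namespace FIG

variable {V V₁ V₂ : Type} [Fintype V] [DecidableEq V]
  [Fintype V₁] [DecidableEq V₁] [Fintype V₂] [DecidableEq V₂]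

/-- `x` is a strong incidence neighbour of `y`: both `(x, xy)` and `(y, xy)` are
(genuine) strong pairs. -/
def SIN (G : FIG V) (x y : V) : Prop :=
  G.IsPair x y ∧ G.IsPair y x ∧ G.IsStrongPair x y ∧ G.IsStrongPair y x

/-- a strong incidence dominating set (SIDS) -/
def SIDS (G : FIG V) (D : Finset V) : Prop :=
  ∀ x, x ∉ D → ∃ y ∈ D, G.SIN x y

/-- the contribution of a vertex `x` to the weight of a dominating set: the minimum
weight of a strong pair `(x, xy)` with `y` a strong incidence neighbour of `x` -/
noncomputable def vertexWeight (G : FIG V) (x : V) : ℝ :=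
  sInf {w | ∃ y, G.SIN x y ∧ w = G.eta x y}

/-- the weight `W(D)` of a strong incidence dominating set -/
noncomputable def weight (G : FIG V) (D : Finset V) : ℝ :=
  ∑ x ∈ D, G.vertexWeight x

/-- the strong incidence domination number `γ_IS`: the least weight of a SIDS -/
noncomputable def gammaIS (G : FIG V) : ℝ :=
  sInf {w | ∃ D : Finset V, G.SIDS D ∧ w = G.weight D}

/-- a minimum strong incidence dominating set -/
def MinSIDS (G : FIG V) (D : Finset V) : Prop :=
  G.SIDS D ∧ G.weight D = G.gammaIS

/-- a complete fuzzy incidence graph: every two distinct vertices are joined by an edge,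
every edge has weight `min (eps x) (eps y)`, and every pair on an edge is effective -/
def Complete (G : FIG V) : Prop :=
  (∀ x, 0 < G.eps x) ∧
  (∀ x y, x ≠ y → 0 < G.rho x y) ∧
  (∀ x y, x ≠ y → G.rho x y = min (G.eps x) (G.eps y)) ∧
  (∀ x y, 0 < G.rho x y → G.eta x y = min (G.eps x) (G.rho x y))

/-- The composition `G₁[G₂]` of two fuzzy incidence graphs: `(a₁,b₁)(a₂,b₂)` is an edge
when `a₁ = a₂` and `b₁b₂ ∈ E₂`, or `a₁a₂ ∈ E₁`; a pair of the composition exists when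
both corresponding pairs of the relevant factor exist. -/
noncomputable def comp (G₁ : FIG V₁) (G₂ : FIG V₂) : FIG (V₁ × V₂) where
  eps := fun p => min (G₁.eps p.1) (G₂.eps p.2)
  rho := fun p q =>
    if p.1 = q.1 then min (G₁.eps p.1) (G₂.rho p.2 q.2)
    else if p.2 = q.2 then min (G₁.rho p.1 q.1) (G₂.eps p.2)
    else min (G₁.rho p.1 q.1) (min (G₂.eps p.2) (G₂.eps q.2))
  eta := fun p q =>
    if p.1 = q.1 then
      (if 0 < G₂.eta p.2 q.2 ∧ 0 < G₂.eta q.2 p.2 then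
        min (G₁.eps p.1) (G₂.eta p.2 q.2) else 0)
    else if 0 < G₁.eta p.1 q.1 ∧ 0 < G₁.eta q.1 p.1 then
      (if p.2 = q.2 then min (G₁.eta p.1 q.1) (G₂.eps p.2)
       else min (G₁.eta p.1 q.1) (min (G₂.eps p.2) (G₂.eps q.2)))
    else 0
  eps_nonneg := fun p => le_min (G₁.eps_nonneg p.1) (G₂.eps_nonneg p.2)
  eps_le_one := fun p => min_le_of_left_le (G₁.eps_le_one p.1)
  rho_nonneg := by
    intro p q; split
    · exact le_min (G₁.eps_nonneg _) (G₂.rho_nonneg _ _)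
    · split
      · exact le_min (G₁.rho_nonneg _ _) (G₂.eps_nonneg _)
      · exact le_min (G₁.rho_nonneg _ _) (le_min (G₂.eps_nonneg _) (G₂.eps_nonneg _))
  rho_symm := by
    intro p q
    by_cases h1 : p.1 = q.1
    · simp [h1, G₂.rho_symm p.2 q.2]
    · by_cases h2 : p.2 = q.2
      · simp [h1, Ne.symm h1, h2, G₁.rho_symm p.1 q.1]
      · simp [h1, Ne.symm h1, h2, Ne.symm h2, G₁.rho_symm p.1 q.1, min_comm (G₂.eps p.2) (G₂.eps q.2)]
  rho_le := by
    intro p q; split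
    · rename_i h1
      refine le_min (le_min (min_le_left _ _) (min_le_of_right_le ?_))
        (le_min (h1 ▸ min_le_left _ _) (min_le_of_right_le ?_))
      · exact le_trans (G₂.rho_le p.2 q.2) (min_le_left _ _)
      · exact le_trans (G₂.rho_le p.2 q.2) (min_le_right _ _)
    · split
      · rename_i h1 h2
        refine le_min (le_min (min_le_of_left_le ?_) (min_le_right _ _))
          (le_min (min_le_of_left_le ?_) (h2 ▸ min_le_right _ _))
        · exact le_trans (G₁.rho_le p.1 q.1) (min_le_left _ _)
        · exact le_trans (G₁.rho_le p.1 q.1) (min_le_right _ _)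
      · refine le_min (le_min (min_le_of_left_le ?_) (min_le_of_right_le (min_le_left _ _)))
          (le_min (min_le_of_left_le ?_) (min_le_of_right_le (min_le_right _ _)))
        · exact le_trans (G₁.rho_le p.1 q.1) (min_le_left _ _)
        · exact le_trans (G₁.rho_le p.1 q.1) (min_le_right _ _)
  rho_irrefl := by
    intro p
    rw [if_pos rfl, G₂.rho_irrefl]
    exact min_eq_right (G₁.eps_nonneg p.1)
  eta_nonneg := by
    intro p q; split
    · split
      · exact le_min (G₁.eps_nonneg _) (G₂.eta_nonneg _ _)
      · exact le_refl 0
    · split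
      · split
        · exact le_min (G₁.eta_nonneg _ _) (G₂.eps_nonneg _)
        · exact le_min (G₁.eta_nonneg _ _) (le_min (G₂.eps_nonneg _) (G₂.eps_nonneg _))
      · exact le_refl 0
  eta_le := by
    intro p q; split
    · split
      · refine le_min (le_min (min_le_left _ _) (min_le_of_right_le ?_))
          (le_min (min_le_left _ _) (min_le_of_right_le ?_))
        · exact le_trans (G₂.eta_le p.2 q.2) (min_le_left _ _)
        · exact le_trans (G₂.eta_le p.2 q.2) (min_le_right _ _)
      · exact le_min (le_min (G₁.eps_nonneg _) (G₂.eps_nonneg _))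
          (le_min (G₁.eps_nonneg _) (G₂.rho_nonneg _ _))
    · split
      · split
        · rename_i hg h2
          refine le_min (le_min (min_le_of_left_le ?_) (min_le_right _ _))
            (le_min (min_le_of_left_le ?_) (min_le_right _ _))
          · exact le_trans (G₁.eta_le p.1 q.1) (min_le_left _ _)
          · exact le_trans (G₁.eta_le p.1 q.1) (min_le_right _ _)
        · refine le_min (le_min (min_le_of_left_le ?_) (min_le_of_right_le (min_le_left _ _)))
            (le_min (min_le_of_left_le ?_) (min_le_right _ _))
          · exact le_trans (G₁.eta_le p.1 q.1) (min_le_left _ _)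
          · exact le_trans (G₁.eta_le p.1 q.1) (min_le_right _ _)
      · split
        · exact le_min (le_min (G₁.eps_nonneg _) (G₂.eps_nonneg _))
            (le_min (G₁.rho_nonneg _ _) (G₂.eps_nonneg _))
        · exact le_min (le_min (G₁.eps_nonneg _) (G₂.eps_nonneg _))
            (le_min (G₁.rho_nonneg _ _) (le_min (G₂.eps_nonneg _) (G₂.eps_nonneg _)))

/-! In a complete fuzzy incidence graph `η = ρ`, and `ρ x y > 0` exactly when `x ≠ y`. Hence in
`G₁[G₂]` the pair conditions in the definition of `η` hold on precisely the edges, so `η = ρ`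
again, and in each of the three cases of `ρ` the weight comes out as the minimum of the
endpoint weights `min (ε₁ a) (ε₂ b)`. -/

theorem min_eps_rho (G : FIG V) (x y : V) : min (G.eps x) (G.rho x y) = G.rho x y :=
  min_eq_right ((G.rho_le x y).trans (min_le_left _ _))

section Complete

variable {G : FIG V}

theorem Complete.eta_eq_rho (hG : G.Complete) (x y : V) : G.eta x y = G.rho x y := by
  rcases (G.rho_nonneg x y).eq_or_lt with h | h
  · rw [← h]
    exact le_antisymm ((G.eta_le x y).trans (h ▸ min_le_right _ _)) (G.eta_nonneg x y)
  · rw [hG.2.2.2 x y h, G.min_eps_rho]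

theorem Complete.rho_pos_iff (hG : G.Complete) {x y : V} : 0 < G.rho x y ↔ x ≠ y :=
  ⟨fun h hxy => h.ne' (hxy ▸ G.rho_irrefl x), hG.2.1 x y⟩

theorem complete_iff : G.Complete ↔ (∀ x, 0 < G.eps x) ∧
    (∀ x y, x ≠ y → G.rho x y = min (G.eps x) (G.eps y)) ∧ ∀ x y, G.eta x y = G.rho x y := by
  refine ⟨fun hG => ⟨hG.1, hG.2.2.1, hG.eta_eq_rho⟩, fun ⟨hε, hρ, hη⟩ => ⟨hε, ?_, hρ, ?_⟩⟩
  · intro x y hxy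
    rw [hρ x y hxy]
    exact lt_min (hε x) (hε y)
  · intro x y _
    rw [hη, G.min_eps_rho]

end Complete

section Comp

variable {G₁ : FIG V₁} {G₂ : FIG V₂}

theorem Complete.comp_rho_eq (h₁ : G₁.Complete) (h₂ : G₂.Complete) {p q : V₁ × V₂}
    (hpq : p ≠ q) :
    (G₁.comp G₂).rho p q = min ((G₁.comp G₂).eps p) ((G₁.comp G₂).eps q) := by
  obtain ⟨a₁, b₁⟩ := p
  obtain ⟨a₂, b₂⟩ := q
  by_cases ha : a₁ = a₂
  · subst ha
    have hb : b₁ ≠ b₂ := fun hb => hpq (hb ▸ rfl)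
    simp only [comp, ↓reduceIte, h₂.2.2.1 b₁ b₂ hb]
    exact inf_inf_distrib_left _ _ _
  · simp only [comp, ha, ↓reduceIte, h₁.2.2.1 a₁ a₂ ha]
    split_ifs with hb
    · rw [← hb, inf_inf_distrib_right]
    · exact inf_inf_inf_comm _ _ _ _

theorem Complete.comp_eta_eq_rho (h₁ : G₁.Complete) (h₂ : G₂.Complete) (p q : V₁ × V₂) :
    (G₁.comp G₂).eta p q = (G₁.comp G₂).rho p q := by
  obtain ⟨a₁, b₁⟩ := p
  obtain ⟨a₂, b₂⟩ := q
  by_cases ha : a₁ = a₂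
  · subst ha
    simp only [comp, ↓reduceIte, h₂.eta_eq_rho, h₂.rho_pos_iff, ne_comm (a := b₂), and_self]
    split_ifs with hb
    · rfl
    · rw [not_not.mp hb, G₂.rho_irrefl, min_eq_right (G₁.eps_nonneg a₁)]
  · simp only [comp, ha, ↓reduceIte, h₁.eta_eq_rho, h₁.rho_pos_iff, ne_comm (a := a₂), ne_eq,
      not_false_eq_true, and_self]

end Comp

/-- **Proposition 41.** The composition of two complete fuzzy incidence graphs is a
complete fuzzy incidence graph. -/
theorem comp_complete (G₁ : FIG V₁) (G₂ : FIG V₂)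
    (h₁ : G₁.Complete) (h₂ : G₂.Complete) : (G₁.comp G₂).Complete :=
  complete_iff.mpr ⟨fun p => lt_min (h₁.1 p.1) (h₂.1 p.2),
    fun _ _ => h₁.comp_rho_eq h₂, h₁.comp_eta_eq_rho h₂⟩

end FIG
end
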